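/- Let d ≥ 1, let x, y ∈ {0,1}^d, let w = 4d + 1, and let t ∈ ℝ with |t| ≥ w. Then CD(A(x) + t, B(y)) = |t|·2(d+1) − 4d² − 5d − 1, where A(x), B(y) ⊂ ℝ are the vector-gadget point sets; in particular this value does not depend on x or y. -/

import Mathlib

open Finset
open scoped Classical

/-- Chamfer distance from finset `A` to finset `B` in `ℝ`:
`CD(A,B) = Σ_{a∈A} min_{b∈B} |a−b|`. -/
noncomputable def CD (A B : Finset ℝ) : ℝ :=
  ∑ a ∈ A, Metric.infDist a (B : Set ℝ)

/-- The translate `A + t = {a + t : a ∈ A}`. -/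
noncomputable def shiftSet (A : Finset ℝ) (t : ℝ) : Finset ℝ :=
  A.image (· + t)

/-- Chamfer distance under translation: `CDuT(A,B) = inf_{t∈ℝ} CD(A+t,B)`. -/
noncomputable def CDuT (A B : Finset ℝ) : ℝ :=
  ⨅ t : ℝ, CD (shiftSet A t) B

/-- The vector gadget `A(x) ⊂ ℝ` for `x ∈ {0,1}^d`: the points `0` and `4d+1`,
together with, for each coordinate `k = i+1 ∈ {1,…,d}`, the points
`{4k−2, 4k−1}` if `x_k = 0` and `{4k−3, 4k}` if `x_k = 1`. -/
noncomputable def gadgetA (d : ℕ) (x : Fin d → Bool) : Finset ℝ :=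
  ({0, 4 * (d : ℝ) + 1} : Finset ℝ) ∪
    Finset.univ.biUnion (fun i : Fin d =>
      if x i then ({4 * (i : ℝ) + 1, 4 * (i : ℝ) + 4} : Finset ℝ)
      else ({4 * (i : ℝ) + 2, 4 * (i : ℝ) + 3} : Finset ℝ))

/-- The vector gadget `B(y) ⊂ ℝ` for `y ∈ {0,1}^d`: the points `0` and `4d+1`,
together with, for each coordinate `k = i+1 ∈ {1,…,d}`, the points
`{4k−3, 4k−2, 4k−1, 4k}` if `y_k = 0` and `{4k−2, 4k−1}` if `y_k = 1`. -/
noncomputable def gadgetB (d : ℕ) (y : Fin d → Bool) : Finset ℝ :=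
  ({0, 4 * (d : ℝ) + 1} : Finset ℝ) ∪
    Finset.univ.biUnion (fun i : Fin d =>
      if y i then ({4 * (i : ℝ) + 2, 4 * (i : ℝ) + 3} : Finset ℝ)
      else ({4 * (i : ℝ) + 1, 4 * (i : ℝ) + 2, 4 * (i : ℝ) + 3, 4 * (i : ℝ) + 4} : Finset ℝ))

/-! Every point of `A(x) + t` lies beyond an end point of `B(y)` once `|t| ≥ 4d + 1`, so its
nearest neighbour in `B(y)` is that end point `0` or `4d + 1`. The Chamfer distance is then an
affine function of `t` whose coefficients are `|A(x)| = 2d + 2` and `Σ A(x) = 4d² + 5d + 1`, and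
neither depends on `x` since the two points of each coordinate block sum to `8i + 5`. -/

namespace Metric

theorem infDist_of_isGreatest {s : Set ℝ} {m p : ℝ} (hs : IsGreatest s m) (hp : m ≤ p) :
    infDist p s = p - m := by
  refine le_antisymm ?_ ((le_infDist ⟨m, hs.1⟩).2 fun b hb => ?_)
  · simpa [Real.dist_eq, abs_of_nonneg (sub_nonneg.2 hp)] using
      infDist_le_dist_of_mem (x := p) hs.1
  · rw [Real.dist_eq, abs_of_nonneg (by linarith [hs.2 hb])]
    linarith [hs.2 hb]

theorem infDist_of_isLeast {s : Set ℝ} {m p : ℝ} (hs : IsLeast s m) (hp : p ≤ m) :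
    infDist p s = m - p := by
  refine le_antisymm ?_ ((le_infDist ⟨m, hs.1⟩).2 fun b hb => ?_)
  · simpa [Real.dist_eq, abs_sub_comm p m, abs_of_nonneg (sub_nonneg.2 hp)] using
      infDist_le_dist_of_mem (x := p) hs.1
  · rw [Real.dist_eq, abs_of_nonpos (by linarith [hs.2 hb])]
    linarith [hs.2 hb]

end Metric

theorem CD_shiftSet (A B : Finset ℝ) (t : ℝ) :
    CD (shiftSet A t) B = ∑ a ∈ A, Metric.infDist (a + t) (B : Set ℝ) :=
  sum_image fun _ _ _ _ => (add_left_inj t).1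

theorem CD_shiftSet_of_isGreatest {A B : Finset ℝ} {m t : ℝ} (hB : IsGreatest (B : Set ℝ) m)
    (hA : ∀ a ∈ A, m ≤ a + t) : CD (shiftSet A t) B = ∑ a ∈ A, a + #A * (t - m) := by
  rw [CD_shiftSet, sum_congr rfl fun a ha => Metric.infDist_of_isGreatest hB (hA a ha)]
  simp only [add_sub_assoc]
  rw [sum_add_distrib, sum_const, nsmul_eq_mul]

theorem CD_shiftSet_of_isLeast {A B : Finset ℝ} {m t : ℝ} (hB : IsLeast (B : Set ℝ) m)
    (hA : ∀ a ∈ A, a + t ≤ m) : CD (shiftSet A t) B = #A * (m - t) - ∑ a ∈ A, a := by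
  rw [CD_shiftSet, sum_congr rfl fun a ha => Metric.infDist_of_isLeast hB (hA a ha)]
  simp only [sub_add_eq_sub_sub_swap]
  rw [sum_sub_distrib, sum_const, nsmul_eq_mul]

section Gadget

variable {d : ℕ}

noncomputable def gadgetABlock (x : Fin d → Bool) (i : Fin d) : Finset ℝ :=
  if x i then {4 * (i : ℝ) + 1, 4 * (i : ℝ) + 4} else {4 * (i : ℝ) + 2, 4 * (i : ℝ) + 3}

noncomputable def gadgetBBlock (y : Fin d → Bool) (i : Fin d) : Finset ℝ :=
  if y i then {4 * (i : ℝ) + 2, 4 * (i : ℝ) + 3}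
  else {4 * (i : ℝ) + 1, 4 * (i : ℝ) + 2, 4 * (i : ℝ) + 3, 4 * (i : ℝ) + 4}

noncomputable def gadget (S : Fin d → Finset ℝ) : Finset ℝ :=
  {0, 4 * (d : ℝ) + 1} ∪ univ.biUnion S

def blockIcc (i : Fin d) : Set ℝ :=
  Set.Icc (4 * (i : ℝ) + 1) (4 * i + 4)

theorem gadgetA_eq_gadget (x : Fin d → Bool) : gadgetA d x = gadget (gadgetABlock x) := rfl

theorem gadgetB_eq_gadget (y : Fin d → Bool) : gadgetB d y = gadget (gadgetBBlock y) := rfl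

theorem gadgetABlock_subset_blockIcc (x : Fin d → Bool) (i : Fin d) :
    (gadgetABlock x i : Set ℝ) ⊆ blockIcc i := by
  intro a ha
  simp only [gadgetABlock, mem_coe] at ha
  split_ifs at ha <;> simp only [mem_insert, mem_singleton] at ha <;>
    rcases ha with rfl | rfl <;> constructor <;> linarith

theorem gadgetBBlock_subset_blockIcc (y : Fin d → Bool) (i : Fin d) :
    (gadgetBBlock y i : Set ℝ) ⊆ blockIcc i := by
  intro b hb
  simp only [gadgetBBlock, mem_coe] at hb
  split_ifs at hb <;> simp only [mem_insert, mem_singleton] at hb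
  · rcases hb with rfl | rfl <;> constructor <;> linarith
  · rcases hb with rfl | rfl | rfl | rfl <;> constructor <;> linarith

theorem blockIcc_subset_Ioo (i : Fin d) : blockIcc i ⊆ Set.Ioo 0 (4 * (d : ℝ) + 1) := by
  have hi : (i : ℝ) + 1 ≤ d := by exact_mod_cast i.isLt
  have hi0 : (0 : ℝ) ≤ i := Nat.cast_nonneg _
  exact Set.Icc_subset_Ioo (by linarith) (by linarith)

theorem eq_of_mem_blockIcc {i j : Fin d} {a : ℝ} (hi : a ∈ blockIcc i) (hj : a ∈ blockIcc j) :
    i = j := by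
  have hij : (i : ℕ) < j + 1 := by exact_mod_cast (by linarith [hi.1, hj.2] : (i : ℝ) < j + 1)
  have hji : (j : ℕ) < i + 1 := by exact_mod_cast (by linarith [hi.2, hj.1] : (j : ℝ) < i + 1)
  exact Fin.ext (by omega)

variable {S : Fin d → Finset ℝ}

theorem mem_Icc_of_mem_gadget (hS : ∀ i, (S i : Set ℝ) ⊆ blockIcc i) {a : ℝ}
    (ha : a ∈ gadget S) : a ∈ Set.Icc 0 (4 * (d : ℝ) + 1) := by
  simp only [gadget, mem_union, mem_insert, mem_singleton, mem_biUnion, mem_univ, true_and] at ha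
  rcases ha with (rfl | rfl) | ⟨i, hi⟩
  · exact ⟨le_rfl, by positivity⟩
  · exact ⟨by positivity, le_rfl⟩
  · exact Set.Ioo_subset_Icc_self (blockIcc_subset_Ioo i (hS i hi))

theorem isLeast_gadget (hS : ∀ i, (S i : Set ℝ) ⊆ blockIcc i) :
    IsLeast (gadget S : Set ℝ) 0 :=
  ⟨by simp [gadget], fun _ ha => (mem_Icc_of_mem_gadget hS ha).1⟩

theorem isGreatest_gadget (hS : ∀ i, (S i : Set ℝ) ⊆ blockIcc i) :
    IsGreatest (gadget S : Set ℝ) (4 * d + 1) :=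
  ⟨by simp [gadget], fun _ ha => (mem_Icc_of_mem_gadget hS ha).2⟩

theorem sum_gadget (hS : ∀ i, (S i : Set ℝ) ⊆ blockIcc i) (f : ℝ → ℝ) :
    ∑ a ∈ gadget S, f a = f 0 + f (4 * d + 1) + ∑ i, ∑ a ∈ S i, f a := by
  have hends : Disjoint ({0, 4 * (d : ℝ) + 1} : Finset ℝ) (univ.biUnion S) := by
    refine disjoint_left.2 fun a ha ha' => ?_
    obtain ⟨i, -, hi⟩ := mem_biUnion.1 ha'
    have := blockIcc_subset_Ioo i (hS i hi)
    rcases mem_insert.1 ha with rfl | ha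
    · exact this.1.false
    · exact (mem_singleton.1 ha ▸ this.2).false
  have hblocks : ((univ : Finset (Fin d)) : Set (Fin d)).PairwiseDisjoint S := fun i _ j _ hij =>
    disjoint_left.2 fun a hai haj => hij (eq_of_mem_blockIcc (hS i hai) (hS j haj))
  have hw : (0 : ℝ) ≠ 4 * d + 1 := by positivity
  rw [gadget, sum_union hends, sum_pair hw, sum_biUnion hblocks]

theorem card_gadgetABlock (x : Fin d → Bool) (i : Fin d) : #(gadgetABlock x i) = 2 := by
  unfold gadgetABlock
  split_ifs <;> exact card_pair (by intro h; linarith)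

theorem sum_gadgetABlock (x : Fin d → Bool) (i : Fin d) :
    ∑ a ∈ gadgetABlock x i, a = 8 * (i : ℝ) + 5 := by
  unfold gadgetABlock
  split_ifs <;> rw [sum_pair (by intro h; linarith)] <;> ring

theorem card_gadgetA (x : Fin d → Bool) : (#(gadgetA d x) : ℝ) = 2 * d + 2 := by
  rw [card_eq_sum_ones, Nat.cast_sum, gadgetA_eq_gadget, sum_gadget (gadgetABlock_subset_blockIcc x)]
  simp only [← Nat.cast_sum, card_gadgetABlock, sum_const, card_univ, Fintype.card_fin,
    nsmul_eq_mul]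
  push_cast
  ring

theorem sum_gadgetA (x : Fin d → Bool) :
    ∑ a ∈ gadgetA d x, a = 4 * (d : ℝ) ^ 2 + 5 * d + 1 := by
  have hblocks : ∀ n : ℕ, ∑ i ∈ range n, (8 * (i : ℝ) + 5) = 4 * (n : ℝ) ^ 2 + n := by
    intro n
    induction n with
    | zero => simp
    | succ n ih => rw [sum_range_succ, ih]; push_cast; ring
  rw [gadgetA_eq_gadget, sum_gadget (gadgetABlock_subset_blockIcc x) fun a => a]
  simp only [sum_gadgetABlock, Fin.sum_univ_eq_sum_range (fun i => 8 * (i : ℝ) + 5), hblocks]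
  ring

end Gadget

theorem far_translation_gadget_value_general (d : ℕ) (x y : Fin d → Bool)
    (t : ℝ) (ht : 4 * (d : ℝ) + 1 ≤ |t|) :
    CD (shiftSet (gadgetA d x) t) (gadgetB d y) =
      |t| * (2 * ((d : ℝ) + 1)) - (4 * (d : ℝ) ^ 2 + 5 * (d : ℝ) + 1) := by
  rw [gadgetB_eq_gadget]
  have hA := fun a (ha : a ∈ gadgetA d x) => mem_Icc_of_mem_gadget (gadgetABlock_subset_blockIcc x) ha
  rcases le_or_gt 0 t with ht0 | ht0
  · rw [abs_of_nonneg ht0] at ht ⊢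
    rw [CD_shiftSet_of_isGreatest (isGreatest_gadget (gadgetBBlock_subset_blockIcc y))
      fun a ha => by linarith [(hA a ha).1], sum_gadgetA, card_gadgetA]
    ring
  · rw [abs_of_neg ht0] at ht ⊢
    rw [CD_shiftSet_of_isLeast (isLeast_gadget (gadgetBBlock_subset_blockIcc y))
      fun a ha => by linarith [(hA a ha).2], sum_gadgetA, card_gadgetA]
    ring

/-- For `|t| ≥ w = 4d+1`, the Chamfer distance of the gadgets is
`|t|·2(d+1) − 4d² − 5d − 1`, independently of `x` and `y`. -/
theorem far_translation_gadget_value (d : ℕ) (hd : 1 ≤ d) (x y : Fin d → Bool)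
    (t : ℝ) (ht : 4 * (d : ℝ) + 1 ≤ |t|) :
    CD (shiftSet (gadgetA d x) t) (gadgetB d y) =
      |t| * (2 * ((d : ℝ) + 1)) - (4 * (d : ℝ) ^ 2 + 5 * (d : ℝ) + 1) :=
  far_translation_gadget_value_general d x y t ht
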